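/- arXiv:1910.04534 — 4 statements merged into one kernel-verified Lean document; each statement's English description precedes it below -/
import Mathlib

section
/- Let δ, γ ∈ (−1, +∞) and let h : [0,∞) → ℝ be continuous with 0 ≤ h(x) ≤ 1 for all x ≥ 0. Then for every x ≥ 0, 0 ≤ F(x; h) ≤ M₁(δ,γ), where M₁(δ,γ) := √π·max(1,1+δ)^{1/2} / (2·min(1,1+δ)·min(1,1+γ)^{1/2}). -/
open Real Filter Set

/-- `F(x; h)` from the paper. -/
noncomputable def Fint (δ γ : ℝ) (h : ℝ → ℝ) (x : ℝ) : ℝ :=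
  ∫ w in (0:ℝ)..x,
    Real.exp (-(∫ z in (0:ℝ)..w, 2*z*(1+γ*h z)/(1+δ*h z))) * (1/(1+δ*h w))

/-- The constant `M₁(δ,γ)` from the paper. -/
noncomputable def M1 (δ γ : ℝ) : ℝ :=
  Real.sqrt π * (max 1 (1+δ)) ^ ((1:ℝ)/2) /
    (2 * (min 1 (1+δ)) * (min 1 (1+γ)) ^ ((1:ℝ)/2))

/-
The factor `1 + a t` with `t ∈ [0, 1]` lies between `1` and `1 + a`, so the inner integrand is at
least `2 b z` with `b = min(1, 1 + γ) / max(1, 1 + δ)` and the outer factor `1 / (1 + δ h)` is at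
most `1 / min(1, 1 + δ)`. Hence the integrand of `F` is dominated by a multiple of `exp(-b w²)`,
whose integral over `(0, ∞)` is `√(π / b) / 2`.
-/

open MeasureTheory

lemma min_one_one_add_pos {a : ℝ} (ha : -1 < a) : 0 < min 1 (1 + a) :=
  lt_min one_pos (by linarith)

lemma one_add_mul_mem_Icc_min_max (a : ℝ) {t : ℝ} (ht : t ∈ Icc (0 : ℝ) 1) :
    1 + a * t ∈ Icc (min 1 (1 + a)) (max 1 (1 + a)) := by
  obtain ⟨ht0, ht1⟩ := ht
  rcases le_total 0 a with ha | ha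
  · rw [min_eq_left (by linarith), max_eq_right (by linarith)]
    constructor <;> nlinarith
  · rw [min_eq_right (by linarith), max_eq_left (by linarith)]
    constructor <;> nlinarith

lemma mul_sq_le_integral_of_le {f : ℝ → ℝ} {c w : ℝ} (hw : 0 ≤ w)
    (hf : IntervalIntegrable f volume 0 w) (hle : ∀ z ∈ Icc 0 w, 2 * c * z ≤ f z) :
    c * w ^ 2 ≤ ∫ z in (0:ℝ)..w, f z := by
  have hlin : ∫ z in (0:ℝ)..w, 2 * c * z = c * w ^ 2 := by
    rw [intervalIntegral.integral_const_mul, integral_id]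
    ring
  rw [← hlin]
  exact intervalIntegral.integral_mono_on hw
    ((continuous_const.mul continuous_id).intervalIntegrable _ _) hf hle

lemma integral_le_mul_gaussian_integral {g : ℝ → ℝ} {b C x : ℝ} (hb : 0 < b) (hC : 0 ≤ C)
    (hx : 0 ≤ x) (hg0 : ∀ w ∈ Ioc 0 x, 0 ≤ g w)
    (hg : ∀ w ∈ Ioc 0 x, g w ≤ C * exp (-b * w ^ 2)) :
    ∫ w in (0:ℝ)..x, g w ≤ C * (√(π / b) / 2) := by
  have hint : Integrable (fun w => C * exp (-b * w ^ 2)) :=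
    (integrable_exp_neg_mul_sq hb).const_mul C
  rw [intervalIntegral.integral_of_le hx, ← integral_gaussian_Ioi b, ← integral_const_mul]
  calc ∫ w in Ioc 0 x, g w
      ≤ ∫ w in Ioc 0 x, C * exp (-b * w ^ 2) :=
        integral_mono_of_nonneg (ae_restrict_of_forall_mem measurableSet_Ioc hg0)
          hint.integrableOn (ae_restrict_of_forall_mem measurableSet_Ioc hg)
    _ ≤ ∫ w in Ioi 0, C * exp (-b * w ^ 2) :=
        setIntegral_mono_set hint.integrableOn
          (Eventually.of_forall fun w => by positivity) Ioc_subset_Ioi_self.eventuallyLE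

lemma sqrt_pi_mul_rpow_div_eq {m M c : ℝ} (hm : 0 < m) (hM : 0 < M) (hc : 0 < c) :
    √π * M ^ ((1:ℝ)/2) / (2 * m * c ^ ((1:ℝ)/2)) = 1 / m * (√(π / (c / M)) / 2) := by
  rw [← sqrt_eq_rpow, ← sqrt_eq_rpow, div_div_eq_mul_div, sqrt_div (by positivity),
    sqrt_mul pi_pos.le]
  have := sqrt_pos.2 hc
  field_simp

section

variable {δ γ : ℝ} {h : ℝ → ℝ}

lemma one_add_mul_pos (hδ : -1 < δ) (hb : MapsTo h (Ici 0) (Icc 0 1)) {z : ℝ} (hz : 0 ≤ z) :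
    0 < 1 + δ * h z :=
  (min_one_one_add_pos hδ).trans_le (one_add_mul_mem_Icc_min_max δ (hb hz)).1

lemma continuousOn_Fint_inner (hδ : -1 < δ) (hcont : ContinuousOn h (Ici 0))
    (hb : MapsTo h (Ici 0) (Icc 0 1)) :
    ContinuousOn (fun z => 2 * z * (1 + γ * h z) / (1 + δ * h z)) (Ici 0) :=
  ((continuousOn_const.mul continuousOn_id).mul (continuousOn_const.add
    (continuousOn_const.mul hcont))).div (continuousOn_const.add (continuousOn_const.mul hcont))
    fun _ hz => (one_add_mul_pos hδ hb hz).ne'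

lemma mul_sq_le_Fint_inner (hδ : -1 < δ) (hγ : -1 < γ) (hcont : ContinuousOn h (Ici 0))
    (hb : MapsTo h (Ici 0) (Icc 0 1)) {w : ℝ} (hw : 0 ≤ w) :
    min 1 (1 + γ) / max 1 (1 + δ) * w ^ 2 ≤
      ∫ z in (0:ℝ)..w, 2 * z * (1 + γ * h z) / (1 + δ * h z) := by
  refine mul_sq_le_integral_of_le hw ?_ fun z hz => ?_
  · exact ((continuousOn_Fint_inner hδ hcont hb).mono
      (by simpa [uIcc_of_le hw] using Icc_subset_Ici_self)).intervalIntegrable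
  have hden := one_add_mul_mem_Icc_min_max δ (hb hz.1)
  have hnum := (one_add_mul_mem_Icc_min_max γ (hb hz.1)).1
  have hratio : min 1 (1 + γ) / max 1 (1 + δ) ≤ (1 + γ * h z) / (1 + δ * h z) :=
    div_le_div₀ ((min_one_one_add_pos hγ).le.trans hnum) hnum
      (one_add_mul_pos hδ hb hz.1) hden.2
  calc 2 * (min 1 (1 + γ) / max 1 (1 + δ)) * z
      = 2 * z * (min 1 (1 + γ) / max 1 (1 + δ)) := by ring
    _ ≤ 2 * z * ((1 + γ * h z) / (1 + δ * h z)) :=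
        mul_le_mul_of_nonneg_left hratio (by linarith [hz.1])
    _ = 2 * z * (1 + γ * h z) / (1 + δ * h z) := (mul_div_assoc _ _ _).symm

lemma Fint_integrand_nonneg (hδ : -1 < δ) (hb : MapsTo h (Ici 0) (Icc 0 1)) {w : ℝ}
    (hw : 0 ≤ w) :
    0 ≤ exp (-(∫ z in (0:ℝ)..w, 2 * z * (1 + γ * h z) / (1 + δ * h z))) *
      (1 / (1 + δ * h w)) :=
  have := one_add_mul_pos hδ hb hw
  by positivity

lemma Fint_integrand_le (hδ : -1 < δ) (hγ : -1 < γ) (hcont : ContinuousOn h (Ici 0))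
    (hb : MapsTo h (Ici 0) (Icc 0 1)) {w : ℝ} (hw : 0 ≤ w) :
    exp (-(∫ z in (0:ℝ)..w, 2 * z * (1 + γ * h z) / (1 + δ * h z))) * (1 / (1 + δ * h w)) ≤
      1 / min 1 (1 + δ) * exp (-(min 1 (1 + γ) / max 1 (1 + δ)) * w ^ 2) := by
  have hm := min_one_one_add_pos hδ
  rw [mul_comm, neg_mul]
  exact mul_le_mul
    (one_div_le_one_div_of_le hm (one_add_mul_mem_Icc_min_max δ (hb hw)).1)
    (exp_le_exp.2 <| neg_le_neg (mul_sq_le_Fint_inner hδ hγ hcont hb hw))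
    (exp_pos _).le (by positivity)

end

theorem F_bounds (δ γ : ℝ) (hδ : -1 < δ) (hγ : -1 < γ)
    (h : ℝ → ℝ) (hcont : ContinuousOn h (Set.Ici 0))
    (hb : ∀ x ≥ (0:ℝ), 0 ≤ h x ∧ h x ≤ 1) :
    ∀ x ≥ (0:ℝ), 0 ≤ Fint δ γ h x ∧ Fint δ γ h x ≤ M1 δ γ := by
  intro x hx
  have hm := min_one_one_add_pos hδ
  have hM : 0 < max 1 (1 + δ) := one_pos.trans_le (le_max_left _ _)
  have hmg := min_one_one_add_pos hγ
  refine ⟨intervalIntegral.integral_nonneg hx fun w hw => Fint_integrand_nonneg hδ hb hw.1, ?_⟩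
  rw [M1, sqrt_pi_mul_rpow_div_eq hm hM hmg]
  exact integral_le_mul_gaussian_integral (div_pos hmg hM) (by positivity) hx
    (fun w hw => Fint_integrand_nonneg hδ hb hw.1.le)
    fun w hw => Fint_integrand_le hδ hγ hcont hb hw.1.le
end

section
/- Let δ, γ ∈ (−1, +∞) and let h : [0,∞) → ℝ be continuous with 0 ≤ h(x) ≤ 1 for all x ≥ 0. Then the limit F(+∞; h) := lim_{x→+∞} F(x; h) exists and satisfies F(+∞; h) ≥ 1/M₂(δ,γ) > 0, where M₂(δ,γ) := 2·max(1,1+δ)·max(1,1+γ)^{1/2} / (√π·min(1,1+δ)^{1/2}). -/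
open Real Filter Set

/-- The constant `M₂(δ,γ)` from the paper. -/
noncomputable def M2 (δ γ : ℝ) : ℝ :=
  2 * (max 1 (1+δ)) * (max 1 (1+γ)) ^ ((1:ℝ)/2) /
    (Real.sqrt π * (min 1 (1+δ)) ^ ((1:ℝ)/2))

/-!
Since `0 ≤ h ≤ 1`, each factor `1 + c h` lies between `m_c := min 1 (1 + c)` and `M_c := max 1 (1 + c)`.
Hence the exponent `∫₀ʷ 2z(1 + γh)/(1 + δh)` lies between `(m_γ / M_δ) w²` and `(M_γ / m_δ) w²`, and the
integrand of `F` between `exp (-(M_γ / m_δ) w²) / M_δ` and `exp (-(m_γ / M_δ) w²) / m_δ`.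
The upper Gaussian makes `F(x)` converge; the lower one bounds the limit below by
`√(π m_δ / M_γ) / (2 M_δ) = 1 / M₂(δ, γ)`.
-/

open MeasureTheory
open scoped Topology

lemma one_add_mul_mem_uIcc {c t : ℝ} (ht : t ∈ Icc (0:ℝ) 1) : 1 + c * t ∈ uIcc 1 (1 + c) := by
  rw [← segment_eq_uIcc]
  exact ⟨1 - t, t, by linarith [ht.2], ht.1, by ring, by simp only [smul_eq_mul]; ring⟩

lemma continuousOn_primitive_Ici {f : ℝ → ℝ} {a : ℝ} (hf : LocallyIntegrableOn f (Ici a)) :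
    ContinuousOn (fun w => ∫ z in a..w, f z) (Ici a) := by
  intro w hw
  have haw : a ≤ w + 1 := by linarith [mem_Ici.1 hw]
  have hint : IntegrableOn f (uIcc a (w + 1)) := by
    rw [uIcc_of_le haw]
    exact hf.integrableOn_compact_subset Icc_subset_Ici_self isCompact_Icc
  have hnhds : Ici a ∩ Iic (w + 1) ∈ 𝓝[Ici a] w :=
    inter_mem_nhdsWithin _ (Iic_mem_nhds (by linarith))
  refine ((intervalIntegral.continuousOn_primitive_interval hint) w ?_).mono_of_mem_nhdsWithin ?_
  · rw [uIcc_of_le haw]; exact ⟨hw, by linarith⟩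
  · rwa [uIcc_of_le haw, ← Ici_inter_Iic]

lemma integral_two_mul_id_mul (a w : ℝ) : ∫ z in (0:ℝ)..w, 2 * z * a = a * w ^ 2 := by
  rw [intervalIntegral.integral_mul_const, intervalIntegral.integral_const_mul, integral_id]
  ring

lemma mul_sq_le_intervalIntegral {f : ℝ → ℝ} {b w : ℝ} (hw : 0 ≤ w)
    (hf : IntervalIntegrable f volume 0 w) (hle : ∀ z ∈ Icc 0 w, 2 * z * b ≤ f z) :
    b * w ^ 2 ≤ ∫ z in (0:ℝ)..w, f z := by
  rw [← integral_two_mul_id_mul]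
  exact intervalIntegral.integral_mono_on hw (by apply Continuous.intervalIntegrable; fun_prop) hf hle

lemma intervalIntegral_le_mul_sq {f : ℝ → ℝ} {a w : ℝ} (hw : 0 ≤ w)
    (hf : IntervalIntegrable f volume 0 w) (hle : ∀ z ∈ Icc 0 w, f z ≤ 2 * z * a) :
    ∫ z in (0:ℝ)..w, f z ≤ a * w ^ 2 := by
  rw [← integral_two_mul_id_mul]
  exact intervalIntegral.integral_mono_on hw hf (by apply Continuous.intervalIntegrable; fun_prop) hle

theorem exists_tendsto_intervalIntegral_of_gaussian_bounds {g : ℝ → ℝ} {a b c C : ℝ}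
    (ha : 0 < a) (hb : 0 < b) (hc : 0 ≤ c) (hg : AEStronglyMeasurable g (volume.restrict (Ioi 0)))
    (hlow : ∀ w ≥ 0, c * exp (-a * w ^ 2) ≤ g w) (hup : ∀ w ≥ 0, g w ≤ C * exp (-b * w ^ 2)) :
    ∃ L, Tendsto (fun x => ∫ w in (0:ℝ)..x, g w) atTop (𝓝 L) ∧ c * (√(π / a) / 2) ≤ L := by
  have hgi : IntegrableOn g (Ioi 0) := by
    refine ((integrable_exp_neg_mul_sq hb).const_mul C).integrableOn.mono' hg ?_
    filter_upwards [ae_restrict_mem measurableSet_Ioi] with w hw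
    have hg0 : 0 ≤ g w := (by positivity : 0 ≤ c * exp (-a * w ^ 2)).trans (hlow w hw.le)
    rw [norm_of_nonneg hg0]
    exact hup w hw.le
  refine ⟨_, intervalIntegral_tendsto_integral_Ioi 0 hgi tendsto_id, ?_⟩
  calc c * (√(π / a) / 2) = ∫ w in Ioi 0, c * exp (-a * w ^ 2) := by
        rw [integral_const_mul, integral_gaussian_Ioi]
    _ ≤ ∫ w in Ioi 0, g w :=
        setIntegral_mono_on ((integrable_exp_neg_mul_sq ha).const_mul c).integrableOn hgi
          measurableSet_Ioi fun w hw => hlow w (le_of_lt hw)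

section Sandwich

variable {p q : ℝ → ℝ} {mp Mp mq Mq : ℝ}

lemma two_mul_mul_div_mem_Icc (hmp : 0 < mp) (hmq : 0 < mq)
    (hpb : ∀ z ≥ 0, mp ≤ p z ∧ p z ≤ Mp) (hqb : ∀ z ≥ 0, mq ≤ q z ∧ q z ≤ Mq)
    {z : ℝ} (hz : 0 ≤ z) :
    2 * z * p z / q z ∈ Icc (2 * z * (mp / Mq)) (2 * z * (Mp / mq)) := by
  obtain ⟨hp_low, hp_up⟩ := hpb z hz
  obtain ⟨hq_low, hq_up⟩ := hqb z hz
  rw [mul_div_assoc]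
  have h2z : 0 ≤ 2 * z := by positivity
  exact ⟨mul_le_mul_of_nonneg_left (div_le_div₀ (by linarith) hp_low (by linarith) hq_up) h2z,
    mul_le_mul_of_nonneg_left (div_le_div₀ (by linarith) hp_up hmq hq_low) h2z⟩

theorem exists_tendsto_integral_exp_neg_integral (hp : ContinuousOn p (Ici 0))
    (hq : ContinuousOn q (Ici 0)) (hmp : 0 < mp) (hmq : 0 < mq)
    (hpb : ∀ z ≥ 0, mp ≤ p z ∧ p z ≤ Mp) (hqb : ∀ z ≥ 0, mq ≤ q z ∧ q z ≤ Mq) :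
    ∃ L, Tendsto (fun x => ∫ w in (0:ℝ)..x,
        exp (-(∫ z in (0:ℝ)..w, 2 * z * p z / q z)) * (1 / q w)) atTop (𝓝 L) ∧
      1 / Mq * (√(π / (Mp / mq)) / 2) ≤ L := by
  have hq_pos : ∀ z ≥ 0, 0 < q z := fun z hz => hmq.trans_le (hqb z hz).1
  have hMp : 0 < Mp := hmp.trans_le ((hpb 0 le_rfl).1.trans (hpb 0 le_rfl).2)
  have hMq : 0 < Mq := hmq.trans_le ((hqb 0 le_rfl).1.trans (hqb 0 le_rfl).2)
  set I := fun w => ∫ z in (0:ℝ)..w, 2 * z * p z / q z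
  have hi : ContinuousOn (fun z => 2 * z * p z / q z) (Ici 0) :=
    ((continuousOn_const.mul continuousOn_id).mul hp).div hq fun z hz => (hq_pos z hz).ne'
  have hI : ContinuousOn I (Ici 0) :=
    continuousOn_primitive_Ici (hi.locallyIntegrableOn measurableSet_Ici)
  have hI_bounds : ∀ w ≥ 0, mp / Mq * w ^ 2 ≤ I w ∧ I w ≤ Mp / mq * w ^ 2 := by
    intro w hw
    have hint : IntervalIntegrable (fun z => 2 * z * p z / q z) volume 0 w :=
      (hi.mono (by rw [uIcc_of_le hw]; exact Icc_subset_Ici_self)).intervalIntegrable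
    exact ⟨mul_sq_le_intervalIntegral hw hint fun z hz =>
        (two_mul_mul_div_mem_Icc hmp hmq hpb hqb hz.1).1,
      intervalIntegral_le_mul_sq hw hint fun z hz =>
        (two_mul_mul_div_mem_Icc hmp hmq hpb hqb hz.1).2⟩
  refine exists_tendsto_intervalIntegral_of_gaussian_bounds (div_pos hMp hmq) (div_pos hmp hMq)
    (by positivity) ?_ (C := 1 / mq) ?_ ?_
  · refine ContinuousOn.aestronglyMeasurable ?_ measurableSet_Ioi
    exact ((continuous_exp.comp_continuousOn hI.neg).mul
      (continuousOn_const.div hq fun z hz => (hq_pos z hz).ne')).mono Ioi_subset_Ici_self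
  · intro w hw
    rw [mul_comm (1 / Mq)]
    exact mul_le_mul (exp_le_exp.2 (by linarith [(hI_bounds w hw).2]))
      (one_div_le_one_div_of_le (hq_pos w hw) (hqb w hw).2) (by positivity) (by positivity)
  · intro w hw
    rw [mul_comm (1 / mq)]
    exact mul_le_mul (exp_le_exp.2 (by linarith [(hI_bounds w hw).1]))
      (one_div_le_one_div_of_le hmq (hqb w hw).1) (one_div_pos.2 (hq_pos w hw)).le (by positivity)

end Sandwich

lemma M2_pos {δ : ℝ} (hδ : -1 < δ) (γ : ℝ) : 0 < M2 δ γ := by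
  have : 0 < min 1 (1 + δ) := lt_min one_pos (by linarith)
  unfold M2
  positivity

lemma one_div_M2_eq {δ : ℝ} (hδ : -1 < δ) (γ : ℝ) :
    1 / max 1 (1 + δ) * (√(π / (max 1 (1 + γ) / min 1 (1 + δ))) / 2) = 1 / M2 δ γ := by
  have hmδ : 0 < min 1 (1 + δ) := lt_min one_pos (by linarith)
  have hMγ : 0 < max 1 (1 + γ) := lt_max_of_lt_left one_pos
  have hMδ : 0 < max 1 (1 + δ) := lt_max_of_lt_left one_pos
  rw [M2, ← sqrt_eq_rpow, ← sqrt_eq_rpow, sqrt_div pi_pos.le, sqrt_div hMγ.le]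
  have : 0 < √(max 1 (1 + γ)) := sqrt_pos.2 hMγ
  have : 0 < √(min 1 (1 + δ)) := sqrt_pos.2 hmδ
  have : 0 < √π := sqrt_pos.2 pi_pos
  field_simp

theorem F_limit_exists_and_bounded_below (δ γ : ℝ) (hδ : -1 < δ) (hγ : -1 < γ)
    (h : ℝ → ℝ) (hcont : ContinuousOn h (Set.Ici 0))
    (hb : ∀ x ≥ (0:ℝ), 0 ≤ h x ∧ h x ≤ 1) :
    ∃ L : ℝ, Tendsto (Fint δ γ h) atTop (nhds L) ∧
      1 / M2 δ γ ≤ L ∧ 0 < 1 / M2 δ γ := by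
  have hbounds (c : ℝ) : ∀ z ≥ 0, min 1 (1 + c) ≤ 1 + c * h z ∧ 1 + c * h z ≤ max 1 (1 + c) :=
    fun z hz => one_add_mul_mem_uIcc (hb z hz)
  have hcont' (c : ℝ) : ContinuousOn (fun z => 1 + c * h z) (Ici 0) :=
    continuousOn_const.add (continuousOn_const.mul hcont)
  obtain ⟨L, hL, hLb⟩ := exists_tendsto_integral_exp_neg_integral (hcont' γ) (hcont' δ)
    (lt_min one_pos (by linarith)) (lt_min one_pos (by linarith)) (hbounds γ) (hbounds δ)
  exact ⟨L, hL, one_div_M2_eq hδ γ ▸ hLb, one_div_pos.2 (M2_pos hδ γ)⟩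
end

section
/- Let δ, γ ∈ (−1, +∞) and let h : [0,∞) → ℝ be continuous with 0 ≤ h(x) ≤ 1 for all x ≥ 0. Then y := T(h) is a solution of the auxiliary linear problem: ((1 + δ h(x)) y'(x))' + 2x(1 + γ h(x)) y'(x) = 0 for all x ∈ (0,∞), y(0) = 0, and lim_{x→+∞} y(x) = 1. -/
open Real Filter Set

/-!
Write `p = 1 + δ h`. The integrand of `F` is `F' = exp (-I) / p`, where `I = Fexponent δ γ h`
has `I' = 2x (1 + γ h) / p`. Hence `p F' = exp (-I)`, whose derivative is
`-I' exp (-I) = -2x (1 + γ h) F'`. Since `F' > 0`, the limit `L` of `F` is positive, so `F / L`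
tends to `1`. As `h` is only continuous on `[0, ∞)`, we replace it by the continuous extension
`h (max x 0)`, which changes neither `F` on `[0, ∞)` nor anything near a point `x > 0`.
-/

lemma one_add_mul_pos_of_mem_Icc {δ t : ℝ} (hδ : -1 < δ) (ht : t ∈ Icc (0:ℝ) 1) :
    0 < 1 + δ * t := by
  obtain ⟨ht0, ht1⟩ := ht
  rcases le_or_gt 0 δ with hδ0 | hδ0
  · nlinarith [mul_nonneg hδ0 ht0]
  · nlinarith [mul_nonneg (neg_nonneg.2 hδ0.le) (sub_nonneg.2 ht1)]

noncomputable def Fexponent (δ γ : ℝ) (h : ℝ → ℝ) (w : ℝ) : ℝ :=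
  ∫ z in (0:ℝ)..w, 2*z*(1+γ*h z)/(1+δ*h z)

lemma Fint_eq_integral_Fexponent (δ γ : ℝ) (h : ℝ → ℝ) (x : ℝ) :
    Fint δ γ h x = ∫ w in (0:ℝ)..x, Real.exp (-Fexponent δ γ h w) * (1/(1+δ*h w)) := rfl

lemma Fexponent_eq_of_eqOn_Ici {δ γ : ℝ} {h h' : ℝ → ℝ} (hh' : EqOn h h' (Ici 0)) {x : ℝ}
    (hx : 0 ≤ x) : Fexponent δ γ h x = Fexponent δ γ h' x := by
  refine intervalIntegral.integral_congr fun z hz => ?_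
  rw [uIcc_of_le hx] at hz
  simp only [hh' hz.1]

lemma Fint_eq_of_eqOn_Ici {δ γ : ℝ} {h h' : ℝ → ℝ} (hh' : EqOn h h' (Ici 0)) {x : ℝ}
    (hx : 0 ≤ x) : Fint δ γ h x = Fint δ γ h' x := by
  simp only [Fint_eq_integral_Fexponent]
  refine intervalIntegral.integral_congr fun w hw => ?_
  rw [uIcc_of_le hx] at hw
  simp only [Fexponent_eq_of_eqOn_Ici hh' hw.1, hh' hw.1]

section ContinuousCoefficient

variable {δ γ : ℝ} {h : ℝ → ℝ} (hc : Continuous h) (hp : ∀ x, 0 < 1 + δ * h x)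
include hc hp

lemma hasDerivAt_Fexponent (x : ℝ) :
    HasDerivAt (Fexponent δ γ h) (2*x*(1+γ*h x)/(1+δ*h x)) x :=
  (Continuous.integral_hasStrictDerivAt
    (by fun_prop (disch := exact fun z => (hp z).ne')) 0 x).hasDerivAt

lemma hasDerivAt_Fint (x : ℝ) :
    HasDerivAt (Fint δ γ h) (Real.exp (-Fexponent δ γ h x) * (1/(1+δ*h x))) x := by
  have hI : Continuous (Fexponent δ γ h) :=
    continuous_iff_continuousAt.2 fun x => (hasDerivAt_Fexponent (γ := γ) hc hp x).continuousAt
  have hintegrand : Continuous fun w => Real.exp (-Fexponent δ γ h w) * (1/(1+δ*h w)) :=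
    (continuous_exp.comp hI.neg).mul (continuous_const.div (by fun_prop) fun w => (hp w).ne')
  exact (hintegrand.integral_hasStrictDerivAt 0 x).hasDerivAt

lemma deriv_Fint_pos (x : ℝ) : 0 < deriv (Fint δ γ h) x := by
  rw [(hasDerivAt_Fint hc hp x).deriv]
  exact mul_pos (exp_pos _) (one_div_pos.2 (hp x))

lemma one_add_mul_mul_deriv_Fint (t : ℝ) :
    (1 + δ * h t) * deriv (Fint δ γ h) t = Real.exp (-Fexponent δ γ h t) := by
  rw [(hasDerivAt_Fint hc hp t).deriv]
  field_simp [(hp t).ne']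

lemma hasDerivAt_flux (x : ℝ) :
    HasDerivAt (fun t => (1 + δ * h t) * deriv (Fint δ γ h) t)
      (-(2 * x * (1 + γ * h x) * deriv (Fint δ γ h) x)) x := by
  simp only [one_add_mul_mul_deriv_Fint hc hp, (hasDerivAt_Fint hc hp x).deriv]
  exact (hasDerivAt_Fexponent hc hp x).fun_neg.exp.congr_deriv (by ring)

lemma pos_of_tendsto_Fint {L : ℝ} (hL : Tendsto (Fint δ γ h) atTop (nhds L)) : 0 < L := by
  have hmono : StrictMono (Fint δ γ h) := strictMono_of_deriv_pos (deriv_Fint_pos hc hp)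
  calc (0:ℝ) = Fint δ γ h 0 := by simp [Fint]
    _ < Fint δ γ h 1 := hmono one_pos
    _ ≤ L := hmono.monotone.ge_of_tendsto hL 1

end ContinuousCoefficient

theorem T_solves_auxiliary_problem_general (δ γ : ℝ) (hδ : -1 < δ)
    (h : ℝ → ℝ) (hcont : ContinuousOn h (Set.Ici 0))
    (hb : ∀ x ≥ (0:ℝ), 0 ≤ h x ∧ h x ≤ 1)
    (L : ℝ) (hL : Tendsto (Fint δ γ h) atTop (nhds L)) :
    (∀ x ∈ Set.Ioi (0:ℝ), DifferentiableAt ℝ (fun t => Fint δ γ h t / L) x) ∧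
    (∀ x ∈ Set.Ioi (0:ℝ),
      HasDerivAt (fun t => (1 + δ * h t) * deriv (fun s => Fint δ γ h s / L) t)
        (-(2 * x * (1 + γ * h x) * deriv (fun s => Fint δ γ h s / L) x)) x) ∧
    (fun x => Fint δ γ h x / L) 0 = 0 ∧
    Tendsto (fun x => Fint δ γ h x / L) atTop (nhds 1) := by
  set h' : ℝ → ℝ := fun x => h (max x 0)
  have hc' : Continuous h' :=
    hcont.comp_continuous (by fun_prop) fun x => le_max_right x 0
  have hp' : ∀ x, 0 < 1 + δ * h' x := fun x =>
    one_add_mul_pos_of_mem_Icc hδ (hb _ (le_max_right x 0))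
  have h_eqOn : EqOn h h' (Ici 0) := fun x hx => by simp only [h', max_eq_left (mem_Ici.1 hx)]
  have hL' : Tendsto (Fint δ γ h') atTop (nhds L) :=
    hL.congr' (eventually_of_mem (Ici_mem_atTop 0) fun x hx => Fint_eq_of_eqOn_Ici h_eqOn hx)
  have hLpos : 0 < L := pos_of_tendsto_Fint hc' hp' hL'
  have hFL : ∀ x ∈ Ioi (0:ℝ),
      (fun s => Fint δ γ h s / L) =ᶠ[nhds x] fun s => Fint δ γ h' s / L := fun x hx =>
    eventually_of_mem (Ioi_mem_nhds hx) fun t ht =>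
      congrArg (· / L) (Fint_eq_of_eqOn_Ici h_eqOn ht.le)
  refine ⟨fun x hx => ?_, fun x hx => ?_, by simp [Fint], ?_⟩
  · exact (((hasDerivAt_Fint hc' hp' x).div_const L).congr_of_eventuallyEq
      (hFL x hx)).differentiableAt
  · have hflux : (fun t => (1 + δ * h t) * deriv (fun s => Fint δ γ h s / L) t)
        =ᶠ[nhds x] fun t => ((1 + δ * h' t) * deriv (Fint δ γ h') t) / L := by
      filter_upwards [Ioi_mem_nhds hx, (hFL x hx).eventuallyEq_nhds] with t ht hFt
      rw [h_eqOn (Ioi_subset_Ici_self ht), hFt.deriv_eq, deriv_div_const, mul_div_assoc]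
    rw [h_eqOn (Ioi_subset_Ici_self hx), (hFL x hx).deriv_eq, deriv_div_const]
    exact (((hasDerivAt_flux hc' hp' x).div_const L).congr_of_eventuallyEq hflux).congr_deriv
      (by ring)
  · simpa [div_self hLpos.ne'] using hL.div_const L

theorem T_solves_auxiliary_problem (δ γ : ℝ) (hδ : -1 < δ) (hγ : -1 < γ)
    (h : ℝ → ℝ) (hcont : ContinuousOn h (Set.Ici 0))
    (hb : ∀ x ≥ (0:ℝ), 0 ≤ h x ∧ h x ≤ 1)
    (L : ℝ) (hL : Tendsto (Fint δ γ h) atTop (nhds L)) :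
    (∀ x ∈ Set.Ioi (0:ℝ), DifferentiableAt ℝ (fun t => Fint δ γ h t / L) x) ∧
    (∀ x ∈ Set.Ioi (0:ℝ),
      HasDerivAt (fun t => (1 + δ * h t) * deriv (fun s => Fint δ γ h s / L) t)
        (-(2 * x * (1 + γ * h x) * deriv (fun s => Fint δ γ h s / L) x)) x) ∧
    (fun x => Fint δ γ h x / L) 0 = 0 ∧
    Tendsto (fun x => Fint δ γ h x / L) atTop (nhds 1) :=
  T_solves_auxiliary_problem_general δ γ hδ h hcont hb L hL
end

section
/- Let δ, γ ∈ (−1, +∞) and let h₁, h₂ : [0,∞) → ℝ be continuous with 0 ≤ hᵢ(x) ≤ 1 for all x ≥ 0 (i = 1, 2). Let f(w) := exp(−2w) and, for i = 1, 2 and w ≥ 0, let wᵢ(w) := ∫₀ʷ z(1 + γ hᵢ(z))/(1 + δ hᵢ(z)) dz. Then for every x ≥ 0, ∫₀ˣ |f(w₁(w)) − f(w₂(w))| dw ≤ (√π·|δ−γ|·max(1,1+δ)^{3/2} / (4·min(1,1+δ)²·min(1,1+γ)^{3/2})) · ‖h₁ − h₂‖∞, where ‖h₁ − h₂‖∞ :=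 sup_{x ≥ 0} |h₁(x) − h₂(x)|. -/
/-!
Write `ρ(a) = (1 + γ a)/(1 + δ a)` for `a ∈ [0, 1]`. Since `1 + δ a` is a convex combination of
`1` and `1 + δ`, `ρ` is bounded below by `c = min 1 (1+γ) / max 1 (1+δ)` and is Lipschitz with
constant `|δ - γ| / min 1 (1+δ)²`. Hence `wᵢ(w) ≥ c w²/2` and `|w₁(w) - w₂(w)| ≤ K w²/2` with
`K = |δ - γ| ‖h₁ - h₂‖∞ / min 1 (1+δ)²`, so by the mean value theorem for `exp` the integrand is at
most `K w² exp(-c w²)`, whose integral over `(0, ∞)` is `K c^{-3/2} √π / 4`.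
-/

open Real Filter Set MeasureTheory

lemma abs_exp_neg_sub_exp_neg_le (a b : ℝ) :
    |exp (-a) - exp (-b)| ≤ |a - b| * exp (-min a b) := by
  wlog hab : a ≤ b generalizing a b
  · rw [abs_sub_comm, abs_sub_comm a b, min_comm]
    exact this b a (le_of_not_ge hab)
  rw [min_eq_left hab, abs_sub_comm a, abs_of_nonneg (sub_nonneg.2 hab),
    abs_of_nonneg (sub_nonneg.2 (exp_le_exp.2 (neg_le_neg hab)))]
  have hsplit : exp (-b) = exp (-a) * exp (a - b) := by rw [← exp_add]; ring_nf
  nlinarith [add_one_le_exp (a - b), exp_pos (-a)]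

lemma integral_sq_mul_exp_neg_mul_sq {c : ℝ} (hc : 0 < c) :
    ∫ x in Ioi (0:ℝ), x ^ 2 * exp (-(c * x ^ 2)) = c ^ (-(3:ℝ) / 2) * √π / 4 := by
  have hGamma : Gamma ((2 + 1) / 2) = √π / 2 := by
    rw [show ((2:ℝ) + 1) / 2 = 1 / 2 + 1 by norm_num, Gamma_add_one (by norm_num),
      Gamma_one_half_eq]
    ring
  have h := integral_rpow_mul_exp_neg_mul_rpow two_pos (by norm_num : (-1:ℝ) < 2) hc
  simp only [rpow_two, hGamma, neg_mul] at h
  rw [h]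
  ring_nf

section RatioBounds

variable {δ γ a b : ℝ}

lemma min_one_le_one_add_mul (ha : a ∈ Icc (0:ℝ) 1) : min 1 (1 + δ) ≤ 1 + δ * a := by
  have hconv : 1 + δ * a = (1 - a) * 1 + a * (1 + δ) := by ring
  rw [hconv]
  nlinarith [ha.1, ha.2, min_le_left 1 (1 + δ), min_le_right 1 (1 + δ)]

lemma one_add_mul_le_max_one (ha : a ∈ Icc (0:ℝ) 1) : 1 + δ * a ≤ max 1 (1 + δ) := by
  have hconv : 1 + δ * a = (1 - a) * 1 + a * (1 + δ) := by ring
  rw [hconv]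
  nlinarith [ha.1, ha.2, le_max_left 1 (1 + δ), le_max_right 1 (1 + δ)]

lemma one_add_mul_pos_s7 (hδ : -1 < δ) (ha : a ∈ Icc (0:ℝ) 1) : 0 < 1 + δ * a :=
  (lt_min one_pos (by linarith)).trans_le (min_one_le_one_add_mul ha)

lemma min_div_max_le_div (hδ : -1 < δ) (hγ : -1 < γ) (ha : a ∈ Icc (0:ℝ) 1) :
    min 1 (1 + γ) / max 1 (1 + δ) ≤ (1 + γ * a) / (1 + δ * a) :=
  div_le_div₀ (one_add_mul_pos_s7 hγ ha).le (min_one_le_one_add_mul ha) (one_add_mul_pos_s7 hδ ha)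
    (one_add_mul_le_max_one ha)

lemma abs_div_sub_div_le (hδ : -1 < δ) (ha : a ∈ Icc (0:ℝ) 1) (hb : b ∈ Icc (0:ℝ) 1) :
    |(1 + γ * a) / (1 + δ * a) - (1 + γ * b) / (1 + δ * b)| ≤
      |δ - γ| * |a - b| / min 1 (1 + δ) ^ 2 := by
  have hda := one_add_mul_pos_s7 hδ ha
  have hdb := one_add_mul_pos_s7 hδ hb
  have hdiff : (1 + γ * a) / (1 + δ * a) - (1 + γ * b) / (1 + δ * b) =
      (γ - δ) * (a - b) / ((1 + δ * a) * (1 + δ * b)) := by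
    rw [div_sub_div _ _ hda.ne' hdb.ne']
    ring
  have hmin : 0 < min 1 (1 + δ) := lt_min one_pos (by linarith)
  rw [hdiff, abs_div, abs_mul, abs_sub_comm γ, abs_of_pos (mul_pos hda hdb), sq]
  exact div_le_div_of_nonneg_left (by positivity) (mul_pos hmin hmin)
    (mul_le_mul (min_one_le_one_add_mul ha) (min_one_le_one_add_mul hb) hmin.le hda.le)

end RatioBounds

section Primitives

variable {f : ℝ → ℝ} {c K w : ℝ}

lemma mul_sq_div_two_le_integral (hw : 0 ≤ w) (hf : IntervalIntegrable f volume 0 w)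
    (hle : ∀ z ∈ Icc 0 w, c * z ≤ f z) : c * w ^ 2 / 2 ≤ ∫ z in (0:ℝ)..w, f z := by
  have hlin : ∫ z in (0:ℝ)..w, c * z = c * w ^ 2 / 2 := by
    rw [intervalIntegral.integral_const_mul, integral_id]
    ring
  rw [← hlin]
  exact intervalIntegral.integral_mono_on hw
    ((continuous_const.mul continuous_id).intervalIntegrable _ _) hf hle

lemma abs_integral_le_mul_sq_div_two (hw : 0 ≤ w) (hle : ∀ z ∈ Icc 0 w, |f z| ≤ K * z) :
    |∫ z in (0:ℝ)..w, f z| ≤ K * w ^ 2 / 2 := by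
  have hlin : ∫ z in (0:ℝ)..w, K * z = K * w ^ 2 / 2 := by
    rw [intervalIntegral.integral_const_mul, integral_id]
    ring
  rw [← hlin]
  simpa only [Real.norm_eq_abs] using intervalIntegral.norm_integral_le_of_norm_le hw
    (ae_of_all _ fun z hz => (Real.norm_eq_abs (f z)).trans_le (hle z (Ioc_subset_Icc_self hz)))
    ((continuous_const.mul continuous_id).intervalIntegrable _ _)

end Primitives

lemma integral_abs_exp_neg_two_mul_sub_le {W₁ W₂ : ℝ → ℝ} {c K x : ℝ} (hc : 0 < c)
    (hK : 0 ≤ K) (hx : 0 ≤ x) (hW₁ : ∀ w ≥ 0, c * w ^ 2 / 2 ≤ W₁ w)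
    (hW₂ : ∀ w ≥ 0, c * w ^ 2 / 2 ≤ W₂ w) (hW : ∀ w ≥ 0, |W₁ w - W₂ w| ≤ K * w ^ 2 / 2) :
    ∫ w in (0:ℝ)..x, |exp (-(2 * W₁ w)) - exp (-(2 * W₂ w))| ≤
      K * (c ^ (-(3:ℝ) / 2) * √π / 4) := by
  set G : ℝ → ℝ := fun w => K * (w ^ 2 * exp (-(c * w ^ 2)))
  have hG : IntegrableOn G (Ioi 0) := by
    refine ((integrableOn_rpow_mul_exp_neg_mul_sq hc (by norm_num : (-1:ℝ) < 2)).congr_fun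
      (fun w _ => ?_) measurableSet_Ioi).const_mul K
    simp only [rpow_two, neg_mul]
  have hpointwise : ∀ w ∈ Ioc 0 x, |exp (-(2 * W₁ w)) - exp (-(2 * W₂ w))| ≤ G w := by
    intro w hw
    have hmin : c * w ^ 2 ≤ min (2 * W₁ w) (2 * W₂ w) :=
      le_min (by linarith [hW₁ w hw.1.le]) (by linarith [hW₂ w hw.1.le])
    have hgap : |2 * W₁ w - 2 * W₂ w| ≤ K * w ^ 2 := by
      rw [← mul_sub, abs_mul, abs_two]
      linarith [hW w hw.1.le]
    calc |exp (-(2 * W₁ w)) - exp (-(2 * W₂ w))|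
        ≤ |2 * W₁ w - 2 * W₂ w| * exp (-min (2 * W₁ w) (2 * W₂ w)) :=
          abs_exp_neg_sub_exp_neg_le _ _
      _ ≤ K * w ^ 2 * exp (-(c * w ^ 2)) :=
          mul_le_mul hgap (exp_le_exp.2 (neg_le_neg hmin)) (exp_pos _).le (by positivity)
      _ = G w := by ring
  rw [intervalIntegral.integral_of_le hx, ← integral_sq_mul_exp_neg_mul_sq hc,
    ← integral_const_mul]
  calc ∫ w in Ioc 0 x, |exp (-(2 * W₁ w)) - exp (-(2 * W₂ w))|
      ≤ ∫ w in Ioc 0 x, G w :=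
        integral_mono_of_nonneg (ae_of_all _ fun _ => abs_nonneg _)
          (hG.mono_set Ioc_subset_Ioi_self)
          ((ae_restrict_iff' measurableSet_Ioc).2 (ae_of_all _ hpointwise))
    _ ≤ ∫ w in Ioi 0, G w :=
        setIntegral_mono_set hG (ae_of_all _ fun _ => by positivity)
          (ae_of_all _ Ioc_subset_Ioi_self)

section WeightedPrimitives

variable {δ γ : ℝ} {h h₁ h₂ : ℝ → ℝ}

lemma continuousOn_mul_div (hδ : -1 < δ) (hcont : ContinuousOn h (Ici 0))
    (hb : MapsTo h (Ici 0) (Icc 0 1)) :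
    ContinuousOn (fun z => z * (1 + γ * h z) / (1 + δ * h z)) (Ici 0) :=
  (continuousOn_id.mul (continuousOn_const.add (continuousOn_const.mul hcont))).div
    (continuousOn_const.add (continuousOn_const.mul hcont))
    fun _ hz => (one_add_mul_pos_s7 hδ (hb hz)).ne'

lemma intervalIntegrable_mul_div (hδ : -1 < δ) (hcont : ContinuousOn h (Ici 0))
    (hb : MapsTo h (Ici 0) (Icc 0 1)) {w : ℝ} (hw : 0 ≤ w) :
    IntervalIntegrable (fun z => z * (1 + γ * h z) / (1 + δ * h z)) volume 0 w :=
  ((continuousOn_mul_div hδ hcont hb).mono (by simp [uIcc_of_le hw, Icc_subset_Ici_self])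
    ).intervalIntegrable

lemma sq_div_two_le_integral_mul_div (hδ : -1 < δ) (hγ : -1 < γ)
    (hcont : ContinuousOn h (Ici 0)) (hb : MapsTo h (Ici 0) (Icc 0 1)) {w : ℝ} (hw : 0 ≤ w) :
    min 1 (1 + γ) / max 1 (1 + δ) * w ^ 2 / 2 ≤
      ∫ z in (0:ℝ)..w, z * (1 + γ * h z) / (1 + δ * h z) := by
  refine mul_sq_div_two_le_integral hw (intervalIntegrable_mul_div hδ hcont hb hw) fun z hz => ?_
  rw [mul_comm, mul_div_assoc]
  exact mul_le_mul_of_nonneg_left (min_div_max_le_div hδ hγ (hb hz.1)) hz.1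

lemma abs_integral_mul_div_sub_le (hδ : -1 < δ) (hcont₁ : ContinuousOn h₁ (Ici 0))
    (hcont₂ : ContinuousOn h₂ (Ici 0)) (hb₁ : MapsTo h₁ (Ici 0) (Icc 0 1))
    (hb₂ : MapsTo h₂ (Ici 0) (Icc 0 1)) {S : ℝ} (hS : ∀ z ≥ 0, |h₁ z - h₂ z| ≤ S)
    {w : ℝ} (hw : 0 ≤ w) :
    |(∫ z in (0:ℝ)..w, z * (1 + γ * h₁ z) / (1 + δ * h₁ z)) -
        ∫ z in (0:ℝ)..w, z * (1 + γ * h₂ z) / (1 + δ * h₂ z)| ≤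
      |δ - γ| * S / min 1 (1 + δ) ^ 2 * w ^ 2 / 2 := by
  rw [← intervalIntegral.integral_sub (intervalIntegrable_mul_div hδ hcont₁ hb₁ hw)
    (intervalIntegrable_mul_div hδ hcont₂ hb₂ hw)]
  refine abs_integral_le_mul_sq_div_two hw fun z hz => ?_
  have hsplit : ∀ a, z * (1 + γ * a) / (1 + δ * a) = z * ((1 + γ * a) / (1 + δ * a)) :=
    fun _ => mul_div_assoc _ _ _
  rw [hsplit, hsplit, ← mul_sub, abs_mul, abs_of_nonneg hz.1, mul_comm]
  refine mul_le_mul_of_nonneg_right ((abs_div_sub_div_le hδ (hb₁ hz.1) (hb₂ hz.1)).trans ?_) hz.1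
  gcongr
  exact hS z hz.1

end WeightedPrimitives
theorem integral_abs_diff_exp_estimate (δ γ : ℝ) (hδ : -1 < δ) (hγ : -1 < γ)
    (h₁ h₂ : ℝ → ℝ)
    (hcont₁ : ContinuousOn h₁ (Set.Ici 0)) (hcont₂ : ContinuousOn h₂ (Set.Ici 0))
    (hb₁ : ∀ x ≥ (0:ℝ), 0 ≤ h₁ x ∧ h₁ x ≤ 1)
    (hb₂ : ∀ x ≥ (0:ℝ), 0 ≤ h₂ x ∧ h₂ x ≤ 1) :
    ∀ x ≥ (0:ℝ),
      (∫ w in (0:ℝ)..x,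
        |Real.exp (-(2 * ∫ z in (0:ℝ)..w, z*(1+γ*h₁ z)/(1+δ*h₁ z))) -
          Real.exp (-(2 * ∫ z in (0:ℝ)..w, z*(1+γ*h₂ z)/(1+δ*h₂ z)))|) ≤
      (Real.sqrt π * |δ-γ| * (max 1 (1+δ)) ^ ((3:ℝ)/2) /
        (4 * (min 1 (1+δ))^2 * (min 1 (1+γ)) ^ ((3:ℝ)/2))) *
      ⨆ t : Set.Ici (0:ℝ), |h₁ t - h₂ t| := by
  intro x hx
  set S := ⨆ t : Set.Ici (0:ℝ), |h₁ t - h₂ t|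
  have hS : ∀ z ≥ (0:ℝ), |h₁ z - h₂ z| ≤ S := by
    refine fun z hz => le_ciSup (f := fun t : Ici (0:ℝ) => |h₁ t - h₂ t|) ⟨1, ?_⟩ (⟨z, hz⟩ : Ici (0:ℝ))
    rintro _ ⟨t, rfl⟩
    have := hb₁ t t.2
    have := hb₂ t t.2
    exact abs_le.2 ⟨by linarith, by linarith⟩
  have hmδ : 0 < min 1 (1 + δ) := lt_min one_pos (by linarith)
  have hmγ : 0 < min 1 (1 + γ) := lt_min one_pos (by linarith)
  have hMδ : 0 < max 1 (1 + δ) := one_pos.trans_le (le_max_left _ _)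
  have hS0 : 0 ≤ S := (abs_nonneg _).trans (hS 0 le_rfl)
  refine (integral_abs_exp_neg_two_mul_sub_le (div_pos hmγ hMδ) (by positivity) hx
    (fun w hw => sq_div_two_le_integral_mul_div hδ hγ hcont₁ hb₁ hw)
    (fun w hw => sq_div_two_le_integral_mul_div hδ hγ hcont₂ hb₂ hw)
    (fun w hw => abs_integral_mul_div_sub_le hδ hcont₁ hcont₂ hb₁ hb₂ hS hw)).trans_eq ?_
  rw [show -(3:ℝ) / 2 = -(3 / 2) by norm_num, rpow_neg (by positivity),
    div_rpow hmγ.le hMδ.le, inv_div]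
  field_simp
end
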